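/- arXiv:1711.09530 — 3 statements merged into one kernel-verified Lean document; each statement's English description precedes it below -/
import Mathlib

section
/- Let (X, μ) be a measure space with μ(X) < ∞, let n ≥ 2 be an integer, ν = n/(n−1), p_j = 2ν^j for j ∈ ℕ, and let C ≥ 1, k ≥ 1 be reals. Let F : X → [0, ∞) be a bounded measurable function such that for every j ≥ 0 one has ‖F‖_{L^{p_{j+1}}(μ)} ≤ (C·p_j³·k)^{1/p_j} · ‖F‖_{L^{p_j}(μ)} (note p_{j+1} = ν·p_j). Then ‖F‖_{L^∞(μ)} ≤ C′·k^{n/2}·‖F‖_{L²(μ)}, where C′ > 0 depends only on n and C. -/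
open MeasureTheory Filter Finset Real
open scoped ENNReal Topology

/-!
Iterating the hypothesis from `p₀ = 2` bounds `‖F‖_{p_J}` by `∏_{j<J} (C p_j³ k)^{1/p_j} ‖F‖₂`.
Since `∑ 1/p_j = n/2` and `∑ log p_j / p_j < ∞`, these products are bounded uniformly in `J` by
`C^{n/2} k^{n/2} exp(3 ∑ log p_j / p_j)`. On a finite measure space Chebyshev's inequality
`c μ{c ≤ |F|}^{1/p} ≤ ‖F‖_p` turns, as `p → ∞`, a uniform bound on the `L^{p_J}` norms into the
same bound on the `L^∞` norm.
-/

theorem prod_range_mul_le_of_forall_succ_le {M : Type*} [CommMonoid M] [Preorder M]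
    [MulLeftMono M] {N a : ℕ → M} (h : ∀ j, N (j + 1) ≤ a j * N j) (J : ℕ) :
    N J ≤ (∏ j ∈ range J, a j) * N 0 := by
  induction J with
  | zero => simp
  | succ J ih =>
    calc N (J + 1) ≤ a J * N J := h J
      _ ≤ a J * ((∏ j ∈ range J, a j) * N 0) := mul_le_mul_right ih _
      _ = (∏ j ∈ range (J + 1), a j) * N 0 := by rw [prod_range_succ]; ac_rfl

theorem prod_mul_rpow_one_div_le {p b : ℕ → ℝ} {a s : ℝ} (ha : 1 ≤ a) (hb : ∀ j, 1 ≤ b j)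
    (hp : ∀ j, 0 < p j) (hs : HasSum (fun j => 1 / p j) s)
    (hlog : Summable fun j => log (b j) / p j) (J : ℕ) :
    ∏ j ∈ range J, (a * b j) ^ (1 / p j) ≤ a ^ s * exp (∑' j, log (b j) / p j) := by
  have h_a : ∏ j ∈ range J, a ^ (1 / p j) ≤ a ^ s := by
    rw [← rpow_sum_of_pos (by linarith)]
    exact rpow_le_rpow_of_exponent_le ha
      (sum_le_hasSum _ (fun j _ => one_div_nonneg.2 (hp j).le) hs)
  have h_b : ∏ j ∈ range J, b j ^ (1 / p j) ≤ exp (∑' j, log (b j) / p j) := by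
    calc ∏ j ∈ range J, b j ^ (1 / p j) = exp (∑ j ∈ range J, log (b j) / p j) := by
          rw [exp_sum]
          refine prod_congr rfl fun j _ => ?_
          rw [rpow_def_of_pos (by linarith [hb j]), mul_one_div]
      _ ≤ exp (∑' j, log (b j) / p j) :=
          exp_le_exp.2 <| hlog.sum_le_tsum _ fun j _ => div_nonneg (log_nonneg (hb j)) (hp j).le
  calc ∏ j ∈ range J, (a * b j) ^ (1 / p j)
        = (∏ j ∈ range J, a ^ (1 / p j)) * ∏ j ∈ range J, b j ^ (1 / p j) := by
          rw [← prod_mul_distrib]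
          exact prod_congr rfl fun j _ => mul_rpow (by linarith) (by linarith [hb j])
    _ ≤ a ^ s * exp (∑' j, log (b j) / p j) :=
          mul_le_mul h_a h_b (prod_nonneg fun j _ => rpow_nonneg (by linarith [hb j]) _)
            (by positivity)

section ChebyshevLimit

variable {α ε : Type*} [MeasurableSpace α] [TopologicalSpace ε] [ContinuousENorm ε]
  {μ : Measure α} {f : α → ε}

theorem mul_meas_ge_rpow_le_eLpNorm {p : ℝ≥0∞} (hp_ne_zero : p ≠ 0) (hp_ne_top : p ≠ ∞)
    (hf : AEStronglyMeasurable f μ) (c : ℝ≥0∞) :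
    c * μ {x | c ≤ ‖f x‖ₑ} ^ (1 / p.toReal) ≤ eLpNorm f p μ := by
  have hp : 0 < p.toReal := ENNReal.toReal_pos hp_ne_zero hp_ne_top
  have h := ENNReal.rpow_le_rpow (mul_meas_ge_le_pow_eLpNorm' μ hp_ne_zero hp_ne_top hf c)
    (one_div_nonneg.2 hp.le)
  rwa [ENNReal.mul_rpow_of_nonneg _ _ (one_div_nonneg.2 hp.le), ← ENNReal.rpow_mul,
    ← ENNReal.rpow_mul, mul_one_div_cancel hp.ne', ENNReal.rpow_one, ENNReal.rpow_one] at h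

theorem eLpNorm_top_le_of_forall_eLpNorm_le [IsFiniteMeasure μ] (hf : AEStronglyMeasurable f μ)
    {p : ℕ → ℝ} (hp : ∀ j, 0 < p j) (hp_lim : Tendsto p atTop atTop) {B : ℝ≥0∞}
    (hB : ∀ j, eLpNorm f (ENNReal.ofReal (p j)) μ ≤ B) : eLpNorm f ⊤ μ ≤ B := by
  rw [eLpNorm_exponent_top]
  refine le_of_forall_lt_imp_le_of_dense fun c hc => ?_
  set m := μ {x | c ≤ ‖f x‖ₑ}
  have hm : 0 < m.toReal := by
    refine ENNReal.toReal_pos (fun hm0 => hc.not_ge (essSup_le_of_ae_le c ?_))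
      (measure_ne_top _ _)
    filter_upwards [measure_eq_zero_iff_ae_notMem.1 hm0] with x hx
    exact (not_le.1 hx).le
  have hm_pow : Tendsto (fun j => m ^ (1 / (ENNReal.ofReal (p j)).toReal)) atTop (𝓝 1) := by
    have h_exp : Tendsto (fun j => 1 / (ENNReal.ofReal (p j)).toReal) atTop (𝓝 0) := by
      refine hp_lim.inv_tendsto_atTop.congr fun j => ?_
      simp [ENNReal.toReal_ofReal (hp j).le]
    have h := ENNReal.tendsto_ofReal (((continuous_const_rpow hm.ne').tendsto 0).comp h_exp)
    rw [rpow_zero, ENNReal.ofReal_one] at h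
    refine h.congr fun j => ?_
    rw [Function.comp_apply, ← ENNReal.ofReal_rpow_of_pos hm,
      ENNReal.ofReal_toReal (measure_ne_top _ _)]
  have h_lim := ENNReal.Tendsto.const_mul hm_pow (Or.inl one_ne_zero) (a := c)
  rw [mul_one] at h_lim
  exact le_of_tendsto' h_lim fun j =>
    (mul_meas_ge_rpow_le_eLpNorm (by simpa using hp j) ENNReal.ofReal_ne_top hf c).trans (hB j)

end ChebyshevLimit

noncomputable def moserExponent (n j : ℕ) : ℝ := 2 * ((n : ℝ) / ((n : ℝ) - 1)) ^ j

section MoserExponent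

variable {n : ℕ}

theorem one_lt_natCast_div_natCast_sub_one (hn : 2 ≤ n) : 1 < (n : ℝ) / ((n : ℝ) - 1) := by
  have : (2 : ℝ) ≤ n := by exact_mod_cast hn
  rw [one_lt_div (by linarith)]
  linarith

theorem one_le_moserExponent (hn : 2 ≤ n) (j : ℕ) : 1 ≤ moserExponent n j := by
  have := one_le_pow₀ (one_lt_natCast_div_natCast_sub_one hn).le (n := j)
  unfold moserExponent
  linarith

theorem tendsto_moserExponent_atTop (hn : 2 ≤ n) : Tendsto (moserExponent n) atTop atTop :=
  (tendsto_pow_atTop_atTop_of_one_lt (one_lt_natCast_div_natCast_sub_one hn)).const_mul_atTop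
    two_pos

theorem one_div_moserExponent (hn : 2 ≤ n) (j : ℕ) :
    1 / moserExponent n j = (((n : ℝ) - 1) / n) ^ j / 2 := by
  have : (2 : ℝ) ≤ n := by exact_mod_cast hn
  have : (n : ℝ) - 1 ≠ 0 := by linarith
  rw [moserExponent, div_pow, div_pow]
  field_simp

theorem hasSum_one_div_moserExponent (hn : 2 ≤ n) :
    HasSum (fun j => 1 / moserExponent n j) ((n : ℝ) / 2) := by
  have : (2 : ℝ) ≤ n := by exact_mod_cast hn
  have h := (hasSum_geometric_of_lt_one (r := ((n : ℝ) - 1) / n)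
    (div_nonneg (by linarith) (by linarith))
    (by rw [div_lt_one (by positivity)]; linarith)).div_const 2
  rwa [show (1 - ((n : ℝ) - 1) / n)⁻¹ = n by field_simp; ring,
    ← funext (one_div_moserExponent hn)] at h

theorem summable_log_pow_div_moserExponent (hn : 2 ≤ n) (q : ℕ) :
    Summable fun j => log (moserExponent n j ^ q) / moserExponent n j := by
  have : (2 : ℝ) ≤ n := by exact_mod_cast hn
  set r : ℝ := ((n : ℝ) - 1) / n
  have hr : ‖r‖ < 1 := by
    rw [Real.norm_eq_abs, abs_of_nonneg (div_nonneg (by linarith) (by linarith)),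
      div_lt_one (by positivity)]
    linarith
  have h := ((summable_geometric_of_norm_lt_one hr).mul_left (q * log 2 / 2)).add
    ((hasSum_coe_mul_geometric_of_norm_lt_one hr).summable.mul_left
      (q * log ((n : ℝ) / ((n : ℝ) - 1)) / 2))
  refine h.congr fun j => ?_
  rw [div_eq_mul_one_div _ (moserExponent n j), one_div_moserExponent hn, log_pow, moserExponent,
    log_mul two_ne_zero (pow_pos (by linarith [one_lt_natCast_div_natCast_sub_one hn]) _).ne',
    log_pow]
  ring

theorem prod_rpow_one_div_moserExponent_le (hn : 2 ≤ n) {C k : ℝ} (hC : 1 ≤ C) (hk : 1 ≤ k)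
    (J : ℕ) :
    ∏ j ∈ range J, (C * moserExponent n j ^ 3 * k) ^ (1 / moserExponent n j) ≤
      C ^ ((n : ℝ) / 2) * exp (∑' j, log (moserExponent n j ^ 3) / moserExponent n j) *
        k ^ ((n : ℝ) / 2) := by
  simp_rw [mul_right_comm C _ k]
  grw [prod_mul_rpow_one_div_le (by nlinarith) (fun j => one_le_pow₀ (one_le_moserExponent hn j))
    (fun j => by linarith [one_le_moserExponent hn j]) (hasSum_one_div_moserExponent hn)
    (summable_log_pow_div_moserExponent hn 3) J, mul_rpow (by linarith) (by linarith)]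
  exact (mul_right_comm _ _ _).le

end MoserExponent

/-- Case-1 core of the Moser iteration: let `n ≥ 2`, `ν = n/(n−1)`, `p_j = 2·ν^j`,
and `C ≥ 1`. There is `C' > 0` depending only on `n` and `C` such that for any
finite measure space `(X, μ)`, any real `k ≥ 1`, and any bounded measurable
nonnegative `F : X → ℝ` satisfying
`‖F‖_{L^{p_{j+1}}} ≤ (C·p_j³·k)^{1/p_j} · ‖F‖_{L^{p_j}}` for all `j`,
one has `‖F‖_{L^∞} ≤ C'·k^{n/2}·‖F‖_{L²}`. -/
theorem moser_iteration_Lp_to_Linfty (n : ℕ) (hn : 2 ≤ n) (C : ℝ) (hC : 1 ≤ C) :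
    ∃ C' : ℝ, 0 < C' ∧
      ∀ (X : Type) [MeasurableSpace X] (μ : Measure X) [IsFiniteMeasure μ]
        (k : ℝ), 1 ≤ k → ∀ F : X → ℝ,
        Measurable F → (∀ x, 0 ≤ F x) → (∃ M : ℝ, ∀ x, F x ≤ M) →
        (∀ j : ℕ,
          eLpNorm F (ENNReal.ofReal (2 * ((n : ℝ) / ((n : ℝ) - 1)) ^ (j + 1))) μ ≤
            ENNReal.ofReal
                ((C * (2 * ((n : ℝ) / ((n : ℝ) - 1)) ^ j) ^ 3 * k) ^
                  (1 / (2 * ((n : ℝ) / ((n : ℝ) - 1)) ^ j))) *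
              eLpNorm F (ENNReal.ofReal (2 * ((n : ℝ) / ((n : ℝ) - 1)) ^ j)) μ) →
        eLpNorm F ⊤ μ ≤
          ENNReal.ofReal (C' * k ^ ((n : ℝ) / 2)) * eLpNorm F 2 μ := by
  refine ⟨C ^ ((n : ℝ) / 2) * exp (∑' j, log (moserExponent n j ^ 3) / moserExponent n j),
    by positivity, ?_⟩
  intro X _ μ _ k hk F hF _ _ hrec
  refine eLpNorm_top_le_of_forall_eLpNorm_le hF.aestronglyMeasurable
    (fun j => by linarith [one_le_moserExponent hn j]) (tendsto_moserExponent_atTop hn)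
    fun J => ?_
  calc eLpNorm F (ENNReal.ofReal (moserExponent n J)) μ
      ≤ (∏ j ∈ range J, ENNReal.ofReal ((C * moserExponent n j ^ 3 * k) ^
          (1 / moserExponent n j))) * eLpNorm F (ENNReal.ofReal (moserExponent n 0)) μ :=
        prod_range_mul_le_of_forall_succ_le
          (N := fun J => eLpNorm F (ENNReal.ofReal (moserExponent n J)) μ) hrec J
    _ = ENNReal.ofReal (∏ j ∈ range J, (C * moserExponent n j ^ 3 * k) ^
          (1 / moserExponent n j)) * eLpNorm F 2 μ := by
        have hp := one_le_moserExponent hn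
        rw [ENNReal.ofReal_prod_of_nonneg fun j _ => rpow_nonneg (mul_nonneg (mul_nonneg
          (by linarith) (pow_nonneg (by linarith [hp j]) 3)) (by linarith)) _]
        simp [moserExponent]
    _ ≤ _ := by grw [prod_rpow_one_div_moserExponent_le hn hC hk J]
end

section
/- Let (X, μ) be a measure space with μ(X) < ∞, let n ≥ 2 be an integer, ν = n/(n−1), p_j = 2ν^j for j ∈ ℕ, and let C ≥ 1, k ≥ 1 be reals. Let F, G : X → [0, ∞) be bounded measurable functions satisfying: (i) for every j ≥ 0, ‖F‖_{L^{p_{j+1}}(μ)}^{p_j} ≤ C·p_j³·k·( ‖F‖_{L^{p_j}(μ)}^{p_j} + k·∫_X G·F^{p_j − 1} dμ ); (ii) ‖F‖_{L¹(μ)} ≤ C·k·‖G‖_{L¹(μ)}; (iii) ‖G‖_{L^∞(μ)} ≤ C·k^n·‖G‖_{L¹(μ)}. Then ‖F‖_{L^∞(μ)} ≤ C′·k^{n+1}·‖G‖_{L¹(μ)}, where C′ > 0 depends only on n and C (and not on k, F, G, or μ). -/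
open MeasureTheory Filter Finset
open scoped ENNReal NNReal


lemma moser_sum_bound (n : ℕ) (hn : 2 ≤ n) (C k : ℝ) (hC : 1 ≤ C) (hk : 1 ≤ k) (j : ℕ) :
    ∑ i ∈ Finset.range j,
      Real.log (2*C*(2*((n:ℝ)/((n:ℝ)-1))^i)^3*k) * (1/(2*((n:ℝ)/((n:ℝ)-1))^i))
      ≤ ((n:ℝ)*Real.log (16*C) + 3*(n:ℝ)^2*Real.log 2)/2 + ((n:ℝ)/2)*Real.log k := by
  have hn1 : (1:ℝ) ≤ (n:ℝ) - 1 := by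
    have : (2:ℝ) ≤ (n:ℝ) := by exact_mod_cast hn
    linarith
  have hnpos : (0:ℝ) < n := by linarith
  set ν : ℝ := (n:ℝ)/((n:ℝ)-1) with hνdef
  have hν1 : 1 < ν := by
    rw [hνdef, lt_div_iff₀ (by linarith)]; linarith
  have hν2 : ν ≤ 2 := by
    rw [hνdef, div_le_iff₀ (by linarith)]
    have : (2:ℝ) ≤ (n:ℝ) := by exact_mod_cast hn
    linarith
  set r : ℝ := ν⁻¹ with hrdef
  have hr0 : 0 ≤ r := by positivity
  have hr1 : r < 1 := by
    rw [hrdef]; exact inv_lt_one_of_one_lt₀ hν1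
  have hrval : 1 - r = 1/(n:ℝ) := by
    rw [hrdef, hνdef]
    field_simp
    ring
  -- termwise bound
  have hterm : ∀ i : ℕ,
      Real.log (2*C*(2*ν^i)^3*k) * (1/(2*ν^i))
      ≤ ((Real.log (16*C) + Real.log k) * r^i + (3*Real.log 2) * (i * r^i)) / 2 := by
    intro i
    have hνi : (0:ℝ) < ν^i := by positivity
    have hbase : 2*C*(2*ν^i)^3*k = (16*C*k) * (ν^i)^3 := by ring
    have hlog : Real.log (2*C*(2*ν^i)^3*k)
        = Real.log (16*C) + Real.log k + 3 * (i * Real.log ν) := by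
      rw [hbase, Real.log_mul (by positivity) (by positivity),
        Real.log_mul (by positivity) (by positivity), Real.log_pow, Real.log_pow]
      push_cast; ring
    have hinv : (1/(2*ν^i)) = r^i / 2 := by
      rw [hrdef, inv_pow]
      field_simp
    rw [hlog, hinv]
    have hlogν : Real.log ν ≤ Real.log 2 := Real.log_le_log (by linarith) hν2
    have h0ν : 0 ≤ Real.log ν := Real.log_nonneg hν1.le
    have hri : 0 ≤ r^i := by positivity
    have key : (i:ℝ) * Real.log ν * r^i ≤ (i:ℝ) * Real.log 2 * r^i :=
      mul_le_mul_of_nonneg_right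
        (mul_le_mul_of_nonneg_left hlogν (Nat.cast_nonneg i)) hri
    nlinarith
  calc ∑ i ∈ Finset.range j, Real.log (2*C*(2*ν^i)^3*k) * (1/(2*ν^i))
      ≤ ∑ i ∈ Finset.range j,
        ((Real.log (16*C) + Real.log k) * r^i + (3*Real.log 2) * (i * r^i)) / 2 :=
        Finset.sum_le_sum fun i _ => hterm i
    _ ≤ _ := by
        have hsum1 : ∑ i ∈ Finset.range j, r^i ≤ (n:ℝ) := by
          calc ∑ i ∈ Finset.range j, r^i ≤ ∑' i : ℕ, r^i :=
              Summable.sum_le_tsum _ (fun i _ => by positivity)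
                (summable_geometric_of_lt_one hr0 hr1)
            _ = (1-r)⁻¹ := tsum_geometric_of_lt_one hr0 hr1
            _ = (n:ℝ) := by rw [hrval]; simp
        have hsum2 : ∑ i ∈ Finset.range j, (i:ℝ) * r^i ≤ (n:ℝ)^2 := by
          have hnorm : ‖r‖ < 1 := by rwa [Real.norm_eq_abs, abs_of_nonneg hr0]
          calc ∑ i ∈ Finset.range j, (i:ℝ) * r^i ≤ ∑' i : ℕ, (i:ℝ) * r^i :=
              Summable.sum_le_tsum _ (fun i _ => by positivity)
                (hasSum_coe_mul_geometric_of_norm_lt_one hnorm).summable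
            _ = r / (1-r)^2 := tsum_coe_mul_geometric_of_norm_lt_one hnorm
            _ ≤ (n:ℝ)^2 := by
                rw [hrval]
                rw [div_le_iff₀ (by positivity)]
                have he : (n:ℝ)^2 * (1/(n:ℝ))^2 = 1 := by field_simp
                rw [he]; linarith
        have hl1 : 0 ≤ Real.log (16*C) + Real.log k := by
          have := Real.log_nonneg (by linarith : (1:ℝ) ≤ 16*C)
          have := Real.log_nonneg hk
          linarith
        have hl2 : (0:ℝ) ≤ 3*Real.log 2 := by positivity
        have hlk : 0 ≤ Real.log k := Real.log_nonneg hk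
        have hlc : 0 ≤ Real.log (16*C) := Real.log_nonneg (by linarith)
        rw [← Finset.sum_div]
        rw [Finset.sum_add_distrib, ← Finset.mul_sum, ← Finset.mul_sum]
        have h1 : (Real.log (16*C) + Real.log k) * (∑ i ∈ Finset.range j, r^i)
            ≤ (Real.log (16*C) + Real.log k) * (n:ℝ) :=
          mul_le_mul_of_nonneg_left hsum1 hl1
        have h2 : (3*Real.log 2) * (∑ i ∈ Finset.range j, (i:ℝ)*r^i)
            ≤ (3*Real.log 2) * (n:ℝ)^2 :=
          mul_le_mul_of_nonneg_left hsum2 hl2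
        nlinarith


lemma moser_prod_bound (n : ℕ) (hn : 2 ≤ n) (C k : ℝ) (hC : 1 ≤ C) (hk : 1 ≤ k) (j : ℕ) :
    ∏ i ∈ Finset.range j, (2*C*(2*((n:ℝ)/((n:ℝ)-1))^i)^3*k) ^ (1/(2*((n:ℝ)/((n:ℝ)-1))^i))
      ≤ Real.exp (((n:ℝ)*Real.log (16*C) + 3*(n:ℝ)^2*Real.log 2)/2) * k ^ ((n:ℝ)/2) := by
  have hn1 : (1:ℝ) ≤ (n:ℝ) - 1 := by
    have : (2:ℝ) ≤ (n:ℝ) := by exact_mod_cast hn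
    linarith
  set ν : ℝ := (n:ℝ)/((n:ℝ)-1) with hνdef
  have hνpos : 0 < ν := by positivity
  have hfac : ∀ i : ℕ, (2*C*(2*ν^i)^3*k) ^ (1/(2*ν^i))
      = Real.exp (Real.log (2*C*(2*ν^i)^3*k) * (1/(2*ν^i))) := by
    intro i
    have hb : 0 < 2*C*(2*ν^i)^3*k := by positivity
    rw [Real.rpow_def_of_pos hb]
  calc ∏ i ∈ Finset.range j, (2*C*(2*ν^i)^3*k) ^ (1/(2*ν^i))
      = Real.exp (∑ i ∈ Finset.range j, Real.log (2*C*(2*ν^i)^3*k) * (1/(2*ν^i))) := by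
        rw [Real.exp_sum]
        exact Finset.prod_congr rfl fun i _ => hfac i
    _ ≤ Real.exp (((n:ℝ)*Real.log (16*C) + 3*(n:ℝ)^2*Real.log 2)/2 + ((n:ℝ)/2)*Real.log k) :=
        Real.exp_le_exp.mpr (moser_sum_bound n hn C k hC hk j)
    _ = _ := by
        rw [Real.exp_add, Real.rpow_def_of_pos (by linarith : (0:ℝ) < k)]
        ring_nf

/-- Measure-theoretic core of the gradient estimate: let `n ≥ 2`, `ν = n/(n−1)`,
`p_j = 2·ν^j`, and `C ≥ 1`. There is `C' > 0` depending only on `n` and `C`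
such that for any finite measure space `(X, μ)`, any real `k ≥ 1`, and any
bounded measurable nonnegative `F, G : X → ℝ` satisfying
(i) `‖F‖_{L^{p_{j+1}}}^{p_j} ≤ C·p_j³·k·(‖F‖_{L^{p_j}}^{p_j} + k·∫ G·F^{p_j−1})`
for all `j`, (ii) `‖F‖_{L¹} ≤ C·k·‖G‖_{L¹}`, and (iii) `‖G‖_{L^∞} ≤ C·kⁿ·‖G‖_{L¹}`,
one has `‖F‖_{L^∞} ≤ C'·k^{n+1}·‖G‖_{L¹}`. -/
theorem moser_iteration_gradient_estimate (n : ℕ) (hn : 2 ≤ n) (C : ℝ) (hC : 1 ≤ C) :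
    ∃ C' : ℝ, 0 < C' ∧
      ∀ (X : Type) [MeasurableSpace X] (μ : Measure X) [IsFiniteMeasure μ]
        (k : ℝ), 1 ≤ k → ∀ F G : X → ℝ,
        Measurable F → (∀ x, 0 ≤ F x) → (∃ M : ℝ, ∀ x, F x ≤ M) →
        Measurable G → (∀ x, 0 ≤ G x) → (∃ M : ℝ, ∀ x, G x ≤ M) →
        (∀ j : ℕ,
          eLpNorm F (ENNReal.ofReal (2 * ((n : ℝ) / ((n : ℝ) - 1)) ^ (j + 1))) μ ^
              (2 * ((n : ℝ) / ((n : ℝ) - 1)) ^ j) ≤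
            ENNReal.ofReal (C * (2 * ((n : ℝ) / ((n : ℝ) - 1)) ^ j) ^ 3 * k) *
              (eLpNorm F (ENNReal.ofReal (2 * ((n : ℝ) / ((n : ℝ) - 1)) ^ j)) μ ^
                  (2 * ((n : ℝ) / ((n : ℝ) - 1)) ^ j) +
                ENNReal.ofReal k *
                  ∫⁻ x,
                    ENNReal.ofReal
                      (G x * F x ^ (2 * ((n : ℝ) / ((n : ℝ) - 1)) ^ j - 1)) ∂μ)) →
        eLpNorm F 1 μ ≤ ENNReal.ofReal (C * k) * eLpNorm G 1 μ →
        eLpNorm G ⊤ μ ≤ ENNReal.ofReal (C * k ^ n) * eLpNorm G 1 μ →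
        eLpNorm F ⊤ μ ≤ ENNReal.ofReal (C' * k ^ (n + 1)) * eLpNorm G 1 μ := by
  have hn2 : (2:ℝ) ≤ (n:ℝ) := by exact_mod_cast hn
  have hn1 : (1:ℝ) ≤ (n:ℝ) - 1 := by linarith
  set ν : ℝ := (n:ℝ)/((n:ℝ)-1) with hνdef
  have hν1 : 1 < ν := by rw [hνdef, lt_div_iff₀ (by linarith)]; linarith
  have hν2 : ν ≤ 2 := by rw [hνdef, div_le_iff₀ (by linarith)]; linarith
  set D0 : ℝ := Real.exp (((n:ℝ)*Real.log (16*C) + 3*(n:ℝ)^2*Real.log 2)/2) with hD0def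
  have hD0 : 1 ≤ D0 := by
    rw [hD0def]
    refine Real.one_le_exp ?_
    have h1 : 0 ≤ Real.log (16*C) := Real.log_nonneg (by linarith)
    have h2 : 0 ≤ Real.log 2 := Real.log_nonneg (by norm_num)
    have : (0:ℝ) ≤ (n:ℝ) := by linarith
    positivity
  refine ⟨4 * D0^2 * C, by positivity, ?_⟩
  intro X _ μ _ k hk F G hFm hF0 hFb hGm hG0 hGb h1 h2 h3
  obtain ⟨MF, hMF⟩ := hFb
  obtain ⟨MG, hMG⟩ := hGb
  have hk0 : (0:ℝ) < k := by linarith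
  -- basic sequence facts
  set p : ℕ → ℝ := fun j => 2 * ν ^ j with hpdef
  have hp2 : ∀ j, 2 ≤ p j := by
    intro j
    have : (1:ℝ) ≤ ν ^ j := one_le_pow₀ hν1.le
    simp only [hpdef]; nlinarith
  have hp0 : ∀ j, 0 < p j := fun j => lt_of_lt_of_le (by norm_num) (hp2 j)
  have hp1 : ∀ j, 1 < p j := fun j => lt_of_lt_of_le (by norm_num) (hp2 j)
  have hpsucc : ∀ j, p (j+1) = ν * p j := by
    intro j; simp only [hpdef]; ring
  -- nonneg enorm rewrites
  set f : X → ℝ≥0∞ := fun x => ENNReal.ofReal (F x) with hfdef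
  set g : X → ℝ≥0∞ := fun x => ENNReal.ofReal (G x) with hgdef
  have hfm : Measurable f := ENNReal.measurable_ofReal.comp hFm
  have hgm : Measurable g := ENNReal.measurable_ofReal.comp hGm
  have hFnorm : ∀ x, (‖F x‖₊ : ℝ≥0∞) = f x := fun x => Real.enorm_eq_ofReal (hF0 x)
  have hGnorm : ∀ x, (‖G x‖₊ : ℝ≥0∞) = g x := fun x => Real.enorm_eq_ofReal (hG0 x)
  set g1 : ℝ≥0∞ := eLpNorm G 1 μ with hg1def
  have hg1 : g1 = ∫⁻ x, g x ∂μ := by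
    rw [hg1def, eLpNorm_one_eq_lintegral_enorm]
    exact lintegral_congr fun x => hGnorm x
  have hg1top : g1 ≠ ⊤ := by
    rw [hg1]
    have : ∫⁻ x, g x ∂μ ≤ ∫⁻ _, ENNReal.ofReal MG ∂μ :=
      lintegral_mono fun x => ENNReal.ofReal_le_ofReal (hMG x)
    rw [lintegral_const] at this
    exact ne_top_of_le_ne_top (ENNReal.mul_ne_top ENNReal.ofReal_ne_top
      (measure_ne_top μ _)) this
  set A : ℝ≥0∞ := eLpNorm F ⊤ μ with hAdef
  have hA : A = essSup f μ := by
    rw [hAdef, eLpNorm_exponent_top, eLpNormEssSup]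
    exact essSup_congr_ae (Filter.Eventually.of_forall fun x => hFnorm x)
  have hAtop : A ≠ ⊤ := by
    rw [hA]
    refine ne_top_of_le_ne_top (ENNReal.ofReal_ne_top (r := MF)) ?_
    exact essSup_le_of_ae_le _ (Filter.Eventually.of_forall fun x =>
      ENNReal.ofReal_le_ofReal (hMF x))
  -- L^p quantities
  set L : ℕ → ℝ≥0∞ := fun j => ∫⁻ x, f x ^ (p j) ∂μ with hLdef
  set N : ℕ → ℝ≥0∞ := fun j => eLpNorm F (ENNReal.ofReal (p j)) μ with hNdef
  have hN : ∀ j, N j = L j ^ (1/(p j)) := by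
    intro j
    rw [hNdef]
    simp only
    rw [eLpNorm_eq_lintegral_rpow_enorm_toReal (by simp [ENNReal.ofReal_eq_zero, not_le]; exact hp0 j)
      ENNReal.ofReal_ne_top]
    rw [ENNReal.toReal_ofReal (hp0 j).le]
    congr 1
    exact lintegral_congr fun x => by rw [Real.enorm_eq_ofReal (hF0 x)]
  have hLtop : ∀ j, L j ≠ ⊤ := by
    intro j
    have hle : L j ≤ (ENNReal.ofReal MF) ^ (p j) * μ Set.univ := by
      rw [hLdef]
      simp only
      calc ∫⁻ x, f x ^ p j ∂μ ≤ ∫⁻ _, (ENNReal.ofReal MF) ^ (p j) ∂μ :=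
          lintegral_mono fun x =>
            ENNReal.rpow_le_rpow (ENNReal.ofReal_le_ofReal (hMF x)) (hp0 j).le
        _ = _ := lintegral_const _
    exact ne_top_of_le_ne_top (ENNReal.mul_ne_top
      (ENNReal.rpow_ne_top_of_nonneg (hp0 j).le ENNReal.ofReal_ne_top)
      (measure_ne_top μ _)) hle
  have hLN : ∀ j, N j ^ (p j) = L j := by
    intro j
    rw [hN j, one_div, ENNReal.rpow_inv_rpow (hp0 j).ne']
  -- hypotheses in f/g form
  have hEssG : essSup g μ ≤ ENNReal.ofReal (C * k^n) * g1 := by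
    have he : eLpNorm G ⊤ μ = essSup g μ := by
      rw [eLpNorm_exponent_top, eLpNormEssSup]
      exact essSup_congr_ae (Filter.Eventually.of_forall hGnorm)
    rw [← he]; exact h3
  have hF1 : ∫⁻ x, f x ∂μ ≤ ENNReal.ofReal (C * k) * g1 := by
    have he : eLpNorm F 1 μ = ∫⁻ x, f x ∂μ := by
      rw [eLpNorm_one_eq_lintegral_enorm]; exact lintegral_congr hFnorm
    rw [← he]; exact h2
  set I : ℕ → ℝ≥0∞ := fun j => ∫⁻ x, ENNReal.ofReal (G x * F x ^ (p j - 1)) ∂μ with hIdef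
  have h1' : ∀ j, N (j+1) ^ (p j) ≤
      ENNReal.ofReal (C * (p j)^3 * k) * (N j ^ (p j) + ENNReal.ofReal k * I j) := h1
  set Q : ℕ → ℝ≥0∞ := fun j =>
    ENNReal.ofReal (C * k ^ ((n:ℝ)+1-(n:ℝ)/(p j))) * g1 with hQdef
  -- Step A : Hölder + interpolation
  have hstepA : ∀ j, ENNReal.ofReal k * I j ≤ Q j * N j ^ (p j - 1) := by
    intro j
    have hpj1 := hp1 j
    have hpj0 := hp0 j
    have hpm1 : (0:ℝ) ≤ p j - 1 := by linarith
    have hconj : (p j).HolderConjugate ((p j)/(p j - 1)) :=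
      Real.HolderConjugate.conjExponent hpj1
    have hI : I j = ∫⁻ x, (g * fun x => f x ^ (p j - 1)) x ∂μ := by
      refine lintegral_congr fun x => ?_
      simp only [Pi.mul_apply]
      rw [ENNReal.ofReal_mul (hG0 x), ENNReal.ofReal_rpow_of_nonneg (hF0 x) hpm1]
    have hholder := ENNReal.lintegral_mul_le_Lp_mul_Lq μ hconj hgm.aemeasurable
      ((hfm.pow_const (p j - 1)).aemeasurable)
    -- second factor equals N j ^ (p j - 1)
    have hsecond : (∫⁻ x, (fun x => f x ^ (p j - 1)) x ^ ((p j)/(p j - 1)) ∂μ)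
        ^ (1/((p j)/(p j - 1))) = N j ^ (p j - 1) := by
      have hexp : (p j - 1) * ((p j)/(p j - 1)) = p j := by
        rw [mul_comm]
        exact div_mul_cancel₀ (p j) (by linarith)
      have hint : (∫⁻ x, (fun x => f x ^ (p j - 1)) x ^ ((p j)/(p j - 1)) ∂μ) = L j := by
        refine lintegral_congr fun x => ?_
        simp only
        rw [← ENNReal.rpow_mul, hexp]
      rw [hint]
      have hq : 1/((p j)/(p j - 1)) = (1/(p j)) * (p j - 1) := by
        field_simp
      rw [hq, ENNReal.rpow_mul, ← hN j]
    -- first factor bound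
    have hgpow : (∫⁻ x, g x ^ (p j) ∂μ) ≤ (essSup g μ)^(p j - 1) * g1 := by
      rw [hg1, ← lintegral_const_mul _ hgm]
      refine lintegral_mono_ae ?_
      filter_upwards [ae_le_essSup (f := g) (μ := μ)] with x hx
      have hgx : g x ^ (p j) = g x ^ (p j - 1) * g x := by
        have h := ENNReal.rpow_add_of_nonneg (x := g x) (p j - 1) 1 hpm1 zero_le_one
        rw [sub_add_cancel, ENNReal.rpow_one] at h
        exact h
      rw [hgx]
      exact mul_le_mul_left (ENNReal.rpow_le_rpow hx hpm1) _
    have hfirst : (∫⁻ x, g x ^ (p j) ∂μ) ^ (1/(p j))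
        ≤ ENNReal.ofReal (C * k ^ ((n:ℝ)-(n:ℝ)/(p j))) * g1 := by
      have e1 : ℝ := (p j - 1)/(p j)
      calc (∫⁻ x, g x ^ (p j) ∂μ) ^ (1/(p j))
          ≤ ((essSup g μ)^(p j - 1) * g1) ^ (1/(p j)) :=
            ENNReal.rpow_le_rpow hgpow (by positivity)
        _ ≤ ((ENNReal.ofReal (C * k^n) * g1)^(p j - 1) * g1) ^ (1/(p j)) := by
            gcongr
        _ = (ENNReal.ofReal (C * k^n)) ^ ((p j - 1) * (1/p j)) *
              (g1 ^ ((p j - 1) * (1/p j)) * g1 ^ (1/p j)) := by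
            rw [ENNReal.mul_rpow_of_nonneg _ _ (by positivity),
              ENNReal.mul_rpow_of_nonneg _ _ (by positivity),
              ENNReal.mul_rpow_of_nonneg _ _ (by positivity),
              ← ENNReal.rpow_mul, ← ENNReal.rpow_mul, mul_assoc]
        _ = (ENNReal.ofReal (C * k^n)) ^ ((p j - 1) * (1/p j)) * g1 := by
            rw [← ENNReal.rpow_add_of_nonneg _ _ (by positivity) (by positivity)]
            rw [show (p j - 1) * (1/p j) + 1/p j = 1 by field_simp; ring, ENNReal.rpow_one]
        _ ≤ ENNReal.ofReal (C * k ^ ((n:ℝ)-(n:ℝ)/(p j))) * g1 := by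
            refine mul_le_mul_left ?_ _
            rw [ENNReal.ofReal_rpow_of_nonneg (by positivity) (by positivity)]
            refine ENNReal.ofReal_le_ofReal ?_
            rw [Real.mul_rpow (by linarith) (by positivity)]
            have hc : C ^ ((p j - 1) * (1/p j)) ≤ C := by
              nth_rewrite 2 [show C = C ^ (1:ℝ) by rw [Real.rpow_one]]
              refine Real.rpow_le_rpow_of_exponent_le hC ?_
              rw [mul_one_div]
              rw [div_le_one hpj0]; linarith
            have hkpow : (k ^ n) ^ ((p j - 1) * (1/p j)) = k ^ ((n:ℝ)-(n:ℝ)/(p j)) := by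
              rw [← Real.rpow_natCast k n, ← Real.rpow_mul hk0.le]
              congr 1
              field_simp
            rw [hkpow]
            exact mul_le_mul_of_nonneg_right hc (by positivity)
    -- assemble
    calc ENNReal.ofReal k * I j
        ≤ ENNReal.ofReal k *
            ((∫⁻ x, g x ^ (p j) ∂μ) ^ (1/(p j)) * (N j ^ (p j - 1))) := by
          rw [hI]
          refine mul_le_mul_right ?_ _
          calc (∫⁻ x, (g * fun x => f x ^ (p j - 1)) x ∂μ)
              ≤ (∫⁻ x, g x ^ (p j) ∂μ) ^ (1/(p j)) *
                (∫⁻ x, (fun x => f x ^ (p j - 1)) x ^ ((p j)/(p j - 1)) ∂μ)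
                  ^ (1/((p j)/(p j - 1))) := hholder
            _ = _ := by rw [hsecond]
      _ ≤ ENNReal.ofReal k *
            ((ENNReal.ofReal (C * k ^ ((n:ℝ)-(n:ℝ)/(p j))) * g1) * (N j ^ (p j - 1))) := by
          exact mul_le_mul_right (mul_le_mul_left hfirst _) _
      _ = Q j * N j ^ (p j - 1) := by
          rw [hQdef]
          simp only
          rw [← mul_assoc, ← mul_assoc, ← ENNReal.ofReal_mul hk0.le]
          congr 3
          rw [show (n:ℝ)+1-(n:ℝ)/(p j) = ((n:ℝ)-(n:ℝ)/(p j)) + 1 by ring,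
            Real.rpow_add_one hk0.ne']
          ring
  -- Step B/C : one-step iteration
  set b : ℕ → ℝ≥0∞ := fun j => max (N j) (Q j) with hbdef
  set e : ℕ → ℝ≥0∞ := fun j => ENNReal.ofReal ((2*C*(p j)^3*k) ^ (1/(p j))) with hedef
  have hstepC : ∀ j, N (j+1) ≤ e j * b j := by
    intro j
    have hpm1 : (0:ℝ) ≤ p j - 1 := by linarith [hp2 j]
    have hbb : b j * b j ^ (p j - 1) = b j ^ (p j) := by
      have h := ENNReal.rpow_add_of_nonneg (x := b j) 1 (p j - 1) zero_le_one hpm1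
      rw [show (1:ℝ) + (p j - 1) = p j by ring, ENNReal.rpow_one] at h
      exact h.symm
    have hb1 : N j ^ (p j) + Q j * N j ^ (p j - 1) ≤ 2 * b j ^ (p j) := by
      have h1b : N j ^ (p j) ≤ b j ^ (p j) :=
        ENNReal.rpow_le_rpow (le_max_left _ _) (hp0 j).le
      have h2b : Q j * N j ^ (p j - 1) ≤ b j ^ (p j) := by
        calc Q j * N j ^ (p j - 1) ≤ b j * b j ^ (p j - 1) :=
            mul_le_mul' (le_max_right _ _) (ENNReal.rpow_le_rpow (le_max_left _ _) hpm1)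
          _ = b j ^ (p j) := hbb
      calc N j ^ (p j) + Q j * N j ^ (p j - 1) ≤ b j ^ (p j) + b j ^ (p j) :=
          add_le_add h1b h2b
        _ = 2 * b j ^ (p j) := (two_mul _).symm
    have hstep : N (j+1) ^ (p j) ≤ ENNReal.ofReal (2*C*(p j)^3*k) * b j ^ (p j) := by
      calc N (j+1) ^ (p j)
          ≤ ENNReal.ofReal (C*(p j)^3*k) * (N j ^ (p j) + ENNReal.ofReal k * I j) := h1' j
        _ ≤ ENNReal.ofReal (C*(p j)^3*k) * (N j ^ (p j) + Q j * N j ^ (p j - 1)) :=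
            mul_le_mul_right (add_le_add_right (hstepA j) _) _
        _ ≤ ENNReal.ofReal (C*(p j)^3*k) * (2 * b j ^ (p j)) := mul_le_mul_right hb1 _
        _ = ENNReal.ofReal (2*C*(p j)^3*k) * b j ^ (p j) := by
            have h2 : ENNReal.ofReal (2*C*(p j)^3*k) = 2 * ENNReal.ofReal (C*(p j)^3*k) := by
              rw [show (2*C*(p j)^3*k : ℝ) = 2 * (C*(p j)^3*k) by ring,
                ENNReal.ofReal_mul (by norm_num : (0:ℝ) ≤ 2), ENNReal.ofReal_ofNat]
            rw [h2]
            ring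
    have hmono := ENNReal.rpow_le_rpow hstep
      (le_of_lt (by positivity : (0:ℝ) < 1/(p j)))
    rw [one_div, ENNReal.rpow_rpow_inv (hp0 j).ne',
      ENNReal.mul_rpow_of_nonneg _ _ (by positivity),
      ENNReal.rpow_rpow_inv (hp0 j).ne'] at hmono
    refine le_trans hmono ?_
    refine mul_le_mul_left (le_of_eq ?_) _
    rw [hedef]
    simp only
    rw [ENNReal.ofReal_rpow_of_nonneg (by positivity) (by positivity), one_div]
  have h2C1 : ∀ j, (1:ℝ) ≤ 2*C*(p j)^3 := by
    intro j
    have h8 : (8:ℝ) ≤ (p j)^3 := by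
      calc (8:ℝ) = 2^3 := by norm_num
        _ ≤ (p j)^3 := pow_le_pow_left₀ (by norm_num) (hp2 j) 3
    nlinarith
  have hstepD : ∀ j, Q (j+1) ≤ e j * Q j := by
    intro j
    have hν0 : ν ≠ 0 := by positivity
    have hνn : ((n:ℝ)-1) * ν = n := by rw [hνdef]; field_simp
    have hexpeq : (n:ℝ)/(p (j+1)) = ((n:ℝ)-1)/(p j) := by
      rw [hpsucc j]
      rw [div_eq_div_iff (by positivity : (0:ℝ) < ν * p j).ne' (hp0 j).ne']
      calc (n:ℝ) * p j = (((n:ℝ)-1) * ν) * p j := by rw [hνn]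
        _ = ((n:ℝ)-1)*(ν * p j) := by ring
    have hpj0' : p j ≠ 0 := (hp0 j).ne'
    have hqq : C * k ^ ((n:ℝ)+1-(n:ℝ)/(p (j+1)))
        = k ^ (1/(p j)) * (C * k ^ ((n:ℝ)+1-(n:ℝ)/(p j))) := by
      rw [hexpeq]
      have hee : ((n:ℝ)+1-((n:ℝ)-1)/(p j)) = 1/(p j) + ((n:ℝ)+1-(n:ℝ)/(p j)) := by
        field_simp
        ring
      rw [hee, Real.rpow_add hk0]
      ring
    calc Q (j+1)
        = ENNReal.ofReal (k ^ (1/(p j))) * Q j := by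
          rw [hQdef]
          simp only
          rw [← mul_assoc, ← ENNReal.ofReal_mul (by positivity : (0:ℝ) ≤ k ^ (1/(p j)))]
          rw [← hqq]
      _ ≤ e j * Q j := by
        refine mul_le_mul_left ?_ _
        rw [hedef]; simp only
        refine ENNReal.ofReal_le_ofReal ?_
        refine Real.rpow_le_rpow hk0.le ?_ (by positivity)
        nlinarith [h2C1 j, hk0]
  have hstepE : ∀ j, b (j+1) ≤ e j * b j := by
    intro j
    refine max_le (hstepC j) ?_
    exact le_trans (hstepD j) (mul_le_mul_right (le_max_right _ _) _)
  -- Step F : iterate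
  have hfacpos : ∀ i : ℕ, (0:ℝ) < 2*C*(p i)^3*k := by
    intro i
    have h3 := pow_pos (hp0 i) 3
    exact mul_pos (mul_pos (mul_pos two_pos (lt_of_lt_of_le one_pos hC)) h3) hk0
  have hiter : ∀ j, b j ≤
      ENNReal.ofReal (∏ i ∈ Finset.range j, (2*C*(p i)^3*k) ^ (1/(p i))) * b 0 := by
    intro j
    induction j with
    | zero => simp
    | succ j ih =>
      calc b (j+1) ≤ e j * b j := hstepE j
        _ ≤ e j * (ENNReal.ofReal (∏ i ∈ Finset.range j, (2*C*(p i)^3*k) ^ (1/(p i))) * b 0) :=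
            mul_le_mul_right ih _
        _ = _ := by
          rw [hedef]
          simp only
          rw [← mul_assoc,
            ← ENNReal.ofReal_mul (Real.rpow_nonneg (hfacpos j).le _)]
          congr 2
          rw [Finset.prod_range_succ, mul_comm]
  have hprod : ∀ j, (∏ i ∈ Finset.range j, (2*C*(p i)^3*k) ^ (1/(p i)))
      ≤ D0 * k ^ ((n:ℝ)/2) := fun j => moser_prod_bound n hn C k hC hk j
  have hD0k : (0:ℝ) ≤ D0 * k ^ ((n:ℝ)/2) := by positivity
  have hNB : ∀ j, N j ≤ ENNReal.ofReal (D0 * k ^ ((n:ℝ)/2)) * b 0 := by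
    intro j
    refine le_trans (le_max_left _ (Q j)) (le_trans (hiter j) ?_)
    exact mul_le_mul_left (ENNReal.ofReal_le_ofReal (hprod j)) _
  -- Step G : pass to the essential supremum
  have h2of : ∀ x : ℝ, (2:ℝ≥0∞) * ENNReal.ofReal x = ENNReal.ofReal (2*x) := by
    intro x
    rw [ENNReal.ofReal_mul (by norm_num : (0:ℝ) ≤ 2), ENNReal.ofReal_ofNat]
  have hA2B : A ≤ ENNReal.ofReal (2*(D0 * k ^ ((n:ℝ)/2))) * b 0 := by
    by_contra hcon
    push_neg at hcon
    obtain ⟨c, hc1, hc2⟩ := exists_between hcon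
    set S : Set X := {x | c < f x} with hSdef
    have hSm : MeasurableSet S := measurableSet_lt measurable_const hfm
    have hS0 : μ S ≠ 0 := by
      intro h0
      have hae : ∀ᵐ x ∂μ, f x ≤ c := by
        rw [ae_iff]
        convert h0 using 2
        ext x
        simp [hSdef, not_le]
      have hle : A ≤ c := by
        rw [hA]
        exact essSup_le_of_ae_le _ hae
      exact absurd hle (not_le.mpr hc2)
    set s : ℝ := (μ S).toReal with hsdef
    have hs0 : 0 < s := ENNReal.toReal_pos hS0 (measure_ne_top μ S)
    have hlow : ∀ j, c * ENNReal.ofReal (s ^ (1/(p j))) ≤ N j := by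
      intro j
      have h1l : c ^ (p j) * μ S ≤ L j := by
        calc c ^ (p j) * μ S = ∫⁻ _ in S, c ^ (p j) ∂μ := (setLIntegral_const S _).symm
          _ ≤ ∫⁻ x in S, f x ^ (p j) ∂μ := by
              refine lintegral_mono_ae ?_
              filter_upwards [ae_restrict_mem hSm] with x hx
              exact ENNReal.rpow_le_rpow (le_of_lt hx) (hp0 j).le
          _ ≤ L j := setLIntegral_le_lintegral S _
      have h2l : (c ^ (p j) * μ S) ^ (1/(p j)) ≤ N j := by
        rw [hN j]
        exact ENNReal.rpow_le_rpow h1l (by positivity)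
      have h3l : (c ^ (p j) * μ S) ^ (1/(p j)) = c * ENNReal.ofReal (s ^ (1/(p j))) := by
        rw [ENNReal.mul_rpow_of_nonneg _ _ (by positivity), one_div,
          ENNReal.rpow_rpow_inv (hp0 j).ne']
        congr 1
        rw [← ENNReal.ofReal_rpow_of_pos hs0, hsdef,
          ENNReal.ofReal_toReal (measure_ne_top μ S)]
      rw [← h3l]
      exact h2l
    have h1t : Tendsto (fun j : ℕ => 2 * ν ^ j) atTop atTop :=
      Tendsto.const_mul_atTop (by norm_num) (tendsto_pow_atTop_atTop_of_one_lt hν1)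
    have hptend : Tendsto (fun j : ℕ => 1/(p j)) atTop (nhds 0) := by
      simp only [hpdef, one_div]
      exact h1t.inv_tendsto_atTop
    have hstend : Tendsto (fun j : ℕ => s ^ (1/(p j))) atTop (nhds 1) := by
      have hcont : ContinuousAt (fun y : ℝ => s ^ y) 0 :=
        Real.continuousAt_const_rpow hs0.ne'
      have hcomp := hcont.tendsto.comp hptend
      simpa [Real.rpow_zero, Function.comp_def] using hcomp
    obtain ⟨j, hj⟩ :=
      (hstend.eventually (eventually_ge_nhds (by norm_num : (1/2:ℝ) < 1))).exists
    have hcB : c * ENNReal.ofReal (1/2 : ℝ) ≤ ENNReal.ofReal (D0 * k ^ ((n:ℝ)/2)) * b 0 :=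
      le_trans (mul_le_mul_right (ENNReal.ofReal_le_ofReal hj) _)
        (le_trans (hlow j) (hNB j))
    have hhalf2 : (ENNReal.ofReal (1/2 : ℝ)) * 2 = 1 := by
      rw [show (1/2 : ℝ) = (2:ℝ)⁻¹ by norm_num,
        ENNReal.ofReal_inv_of_pos (by norm_num), ENNReal.ofReal_ofNat,
        ENNReal.inv_mul_cancel (by norm_num) (by norm_num)]
    have hc2B : c ≤ ENNReal.ofReal (2*(D0 * k ^ ((n:ℝ)/2))) * b 0 := by
      calc c = c * ((ENNReal.ofReal (1/2:ℝ)) * 2) := by rw [hhalf2, mul_one]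
        _ = (c * ENNReal.ofReal (1/2:ℝ)) * 2 := by ring
        _ ≤ (ENNReal.ofReal (D0 * k ^ ((n:ℝ)/2)) * b 0) * 2 := mul_le_mul_left hcB _
        _ = (2:ℝ≥0∞) * ENNReal.ofReal (D0 * k ^ ((n:ℝ)/2)) * b 0 := by ring
        _ = ENNReal.ofReal (2*(D0 * k ^ ((n:ℝ)/2))) * b 0 := by rw [h2of]
    exact absurd hc1 (not_lt.mpr hc2B)
  -- Step H : conclude
  have hp00 : p 0 = 2 := by simp [hpdef]
  rcases le_total (N 0) (Q 0) with hmax | hmax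
  · -- case b 0 = Q 0
    have hb0 : b 0 = Q 0 := max_eq_right hmax
    have hQ0 : Q 0 = ENNReal.ofReal (C * k ^ ((n:ℝ)/2 + 1)) * g1 := by
      rw [hQdef]
      simp only
      rw [hp00, show (n:ℝ)+1-(n:ℝ)/2 = (n:ℝ)/2+1 by ring]
    calc A ≤ ENNReal.ofReal (2*(D0 * k ^ ((n:ℝ)/2))) * b 0 := hA2B
      _ = ENNReal.ofReal ((2*(D0 * k ^ ((n:ℝ)/2))) * (C * k ^ ((n:ℝ)/2 + 1))) * g1 := by
          rw [hb0, hQ0, ← mul_assoc, ← ENNReal.ofReal_mul (by positivity)]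
      _ ≤ ENNReal.ofReal (4 * D0 ^ 2 * C * k ^ (n + 1)) * g1 := by
          refine mul_le_mul_left (ENNReal.ofReal_le_ofReal ?_) _
          have hkk : k ^ ((n:ℝ)/2) * k ^ ((n:ℝ)/2+1) = k ^ (n+1) := by
            rw [← Real.rpow_add hk0,
              show (n:ℝ)/2 + ((n:ℝ)/2+1) = ((n+1:ℕ):ℝ) by push_cast; ring]
            exact Real.rpow_natCast k (n+1)
          calc 2*(D0 * k ^ ((n:ℝ)/2)) * (C * k ^ ((n:ℝ)/2+1))
              = 2*D0*C * (k ^ ((n:ℝ)/2) * k ^ ((n:ℝ)/2+1)) := by ring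
            _ = 2*D0*C * k^(n+1) := by rw [hkk]
            _ ≤ 4*D0^2*C * k^(n+1) := by
                have hkp : (0:ℝ) ≤ k^(n+1) := by positivity
                have h1c : 2*D0 ≤ 4*D0^2 := by
                  nlinarith [mul_nonneg (by linarith : (0:ℝ) ≤ D0 - 1)
                    (by linarith : (0:ℝ) ≤ D0)]
                have hcoef : 2*D0*C ≤ 4*D0^2*C :=
                  mul_le_mul_of_nonneg_right h1c (by linarith)
                exact mul_le_mul_of_nonneg_right hcoef hkp
  · -- case b 0 = N 0
    have hb0 : b 0 = N 0 := max_eq_left hmax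
    by_cases hA0 : A = 0
    · rw [hA0]
      exact zero_le
    have hNN : N 0 * N 0 = L 0 := by
      have h := hLN 0
      rw [hp00] at h
      rw [← h, show ((2:ℝ)) = ((2:ℕ):ℝ) by norm_num, ENNReal.rpow_natCast, pow_two]
    have hL0le : L 0 ≤ A * (ENNReal.ofReal (C*k) * g1) := by
      calc L 0
          ≤ ∫⁻ x, A * f x ∂μ := by
            refine lintegral_mono_ae ?_
            filter_upwards [ae_le_essSup (f := f) (μ := μ)] with x hx
            rw [hp00, show ((2:ℝ)) = ((2:ℕ):ℝ) by norm_num, ENNReal.rpow_natCast, pow_two]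
            exact mul_le_mul_left (le_trans hx (le_of_eq hA.symm)) _
        _ = A * ∫⁻ x, f x ∂μ := lintegral_const_mul A hfm
        _ ≤ A * (ENNReal.ofReal (C*k) * g1) := mul_le_mul_right hF1 _
    have hE : ENNReal.ofReal (2*(D0 * k ^ ((n:ℝ)/2))) *
        ENNReal.ofReal (2*(D0 * k ^ ((n:ℝ)/2))) * ENNReal.ofReal (C*k)
        = ENNReal.ofReal (4 * D0 ^ 2 * C * k ^ (n + 1)) := by
      rw [← ENNReal.ofReal_mul (by positivity), ← ENNReal.ofReal_mul (by positivity)]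
      congr 1
      have hkk : k ^ ((n:ℝ)/2) * k ^ ((n:ℝ)/2) = k ^ (n:ℕ) := by
        rw [← Real.rpow_add hk0, show (n:ℝ)/2 + (n:ℝ)/2 = ((n:ℕ):ℝ) by push_cast; ring]
        exact Real.rpow_natCast k n
      calc 2*(D0 * k ^ ((n:ℝ)/2)) * (2*(D0 * k ^ ((n:ℝ)/2))) * (C*k)
          = 4*D0^2*C*(k ^ ((n:ℝ)/2) * k ^ ((n:ℝ)/2)) * k := by ring
        _ = 4*D0^2*C*k^(n:ℕ) * k := by rw [hkk]
        _ = 4*D0^2*C*k^(n+1) := by ring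
    have hAA : A * A ≤ (ENNReal.ofReal (4 * D0 ^ 2 * C * k ^ (n + 1)) * g1) * A := by
      calc A * A
          ≤ (ENNReal.ofReal (2*(D0 * k ^ ((n:ℝ)/2))) * N 0) *
            (ENNReal.ofReal (2*(D0 * k ^ ((n:ℝ)/2))) * N 0) := by
            have := hA2B
            rw [hb0] at this
            exact mul_le_mul' this this
        _ = (ENNReal.ofReal (2*(D0 * k ^ ((n:ℝ)/2))) *
              ENNReal.ofReal (2*(D0 * k ^ ((n:ℝ)/2)))) * (N 0 * N 0) := by ring
        _ ≤ (ENNReal.ofReal (2*(D0 * k ^ ((n:ℝ)/2))) *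
              ENNReal.ofReal (2*(D0 * k ^ ((n:ℝ)/2)))) * (A * (ENNReal.ofReal (C*k) * g1)) := by
            rw [hNN]
            exact mul_le_mul_right hL0le _
        _ = (ENNReal.ofReal (2*(D0 * k ^ ((n:ℝ)/2))) *
              ENNReal.ofReal (2*(D0 * k ^ ((n:ℝ)/2))) * ENNReal.ofReal (C*k) * g1) * A := by
            ring
        _ = (ENNReal.ofReal (4 * D0 ^ 2 * C * k ^ (n + 1)) * g1) * A := by rw [hE]
    exact (ENNReal.mul_le_mul_iff_left hA0 hAtop).mp hAA
end

section
/- Let (X, μ) be a measure space with μ(X) < ∞, let n ≥ 2 be an integer, ν = n/(n−1), and set q_j = ν^j for j ∈ ℕ. Let C ≥ 1 and k ≥ 1 be reals. If F : X → [0, ∞) is a bounded measurable function satisfying ‖F‖_{L^{q_{j+1}}(μ)}^{q_j} ≤ C·q_j·k·‖F‖_{L^{q_j}(μ)}^{q_j} for every j ≥ 0, then ‖F‖_{L^∞(μ)} ≤ C′·k^n·‖F‖_{L¹(μ)}, where C′ > 0 depends only on n and C. -/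
/-!
Raising the hypothesis at step `j` to the power `1/q_j` gives
`‖F‖_{q_{j+1}} ≤ (C k q_j)^{1/q_j} ‖F‖_{q_j}`. Iterating from `q_0 = 1`, the product of these
factors stays bounded because `∑ 1/q_j = n` and `∑ j/q_j = n(n-1)`, so
`‖F‖_{q_m} ≤ (C k)^n ν^{n(n-1)} ‖F‖_1` uniformly in `m`. On a finite measure space the
`L^q` norms control the essential supremum as `q → ∞`: on `{‖F‖ > ρ}` one has
`‖F‖_q ≥ ρ μ{‖F‖ > ρ}^{1/q} → ρ`.
-/

open MeasureTheory Filter Finset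
open scoped ENNReal Topology

theorem le_prod_range_mul_of_le_mul {M : Type*} [CommMonoid M] [Preorder M] [MulLeftMono M]
    {A g : ℕ → M} (h : ∀ m, A (m + 1) ≤ g m * A m) (m : ℕ) :
    A m ≤ (∏ j ∈ range m, g j) * A 0 := by
  induction m with
  | zero => simp
  | succ m ih =>
    calc A (m + 1) ≤ g m * A m := h m
      _ ≤ g m * ((∏ j ∈ range m, g j) * A 0) := mul_le_mul_right ih _
      _ = (∏ j ∈ range (m + 1), g j) * A 0 := by rw [prod_range_succ, mul_comm _ (g m), mul_assoc]

theorem ENNReal.le_rpow_inv_mul_of_rpow_le_mul_rpow {a b c : ℝ≥0∞} {t : ℝ} (ht : 0 < t)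
    (h : a ^ t ≤ c * b ^ t) : a ≤ c ^ t⁻¹ * b :=
  calc a = (a ^ t) ^ t⁻¹ := (ENNReal.rpow_rpow_inv ht.ne' a).symm
    _ ≤ (c * b ^ t) ^ t⁻¹ := ENNReal.rpow_le_rpow h (inv_nonneg.2 ht.le)
    _ = c ^ t⁻¹ * b := by
      rw [ENNReal.mul_rpow_of_nonneg _ _ (inv_nonneg.2 ht.le), ENNReal.rpow_rpow_inv ht.ne']

theorem Real.prod_range_mul_pow_rpow_inv_pow_le {a b : ℝ} (ha : 1 ≤ a) (hb : 1 < b) (m : ℕ) :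
    ∏ j ∈ range m, (a * b ^ j) ^ (b ^ j)⁻¹ ≤ a ^ (b / (b - 1)) * b ^ (b / (b - 1) ^ 2) := by
  have hb0 : 0 < b := one_pos.trans hb
  set r := b⁻¹ with hr
  have hr0 : 0 ≤ r := inv_nonneg.2 hb0.le
  have hr1 : r < 1 := inv_lt_one_of_one_lt₀ hb
  have hr1' : ‖r‖ < 1 := by rwa [Real.norm_of_nonneg hr0]
  have hfactor : ∀ j : ℕ, (a * b ^ j) ^ (b ^ j)⁻¹ = a ^ (r ^ j) * b ^ ((j : ℝ) * r ^ j) := by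
    intro j
    rw [Real.mul_rpow (by positivity) (by positivity), ← Real.rpow_natCast b j,
      ← Real.rpow_mul hb0.le, Real.rpow_natCast, inv_pow]
  have hgeom : ∑ j ∈ range m, r ^ j ≤ b / (b - 1) := by
    calc ∑ j ∈ range m, r ^ j ≤ ∑' j, r ^ j :=
          Summable.sum_le_tsum _ (fun j _ => pow_nonneg hr0 j)
            (summable_geometric_of_lt_one hr0 hr1)
      _ = b / (b - 1) := by
          rw [tsum_geometric_of_lt_one hr0 hr1, hr]
          field_simp
  have hgeom_weighted : ∑ j ∈ range m, (j : ℝ) * r ^ j ≤ b / (b - 1) ^ 2 := by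
    calc ∑ j ∈ range m, (j : ℝ) * r ^ j ≤ ∑' j : ℕ, (j : ℝ) * r ^ j :=
          Summable.sum_le_tsum _ (fun j _ => by positivity)
            (hasSum_coe_mul_geometric_of_norm_lt_one hr1').summable
      _ = b / (b - 1) ^ 2 := by
          rw [tsum_coe_mul_geometric_of_norm_lt_one hr1', hr]
          field_simp
  rw [prod_congr rfl fun j _ => hfactor j, prod_mul_distrib,
    ← Real.rpow_sum_of_pos (one_pos.trans_le ha), ← Real.rpow_sum_of_pos hb0]
  gcongr
  exact hb.le

theorem Real.prod_range_mul_conjExponent_pow_rpow_inv_pow_le {a N : ℝ} (ha : 1 ≤ a) (hN : 1 < N)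
    (m : ℕ) :
    ∏ j ∈ range m, (a * (N / (N - 1)) ^ j) ^ ((N / (N - 1)) ^ j)⁻¹ ≤
      a ^ N * (N / (N - 1)) ^ (N * (N - 1)) := by
  have hN1 : N - 1 ≠ 0 := (sub_pos.2 hN).ne'
  have hconj : N / (N - 1) - 1 = (N - 1)⁻¹ := by
    field_simp
    ring
  have hexp : N / (N - 1) / (N / (N - 1) - 1) = N := by
    rw [hconj]
    field_simp
  have hexp2 : N / (N - 1) / (N / (N - 1) - 1) ^ 2 = N * (N - 1) := by
    rw [hconj]
    field_simp
  have hconj_gt : 1 < N / (N - 1) := (one_lt_div (sub_pos.2 hN)).2 (sub_lt_self N one_pos)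
  have h := prod_range_mul_pow_rpow_inv_pow_le ha hconj_gt m
  rwa [hexp, hexp2] at h

theorem eLpNorm_top_le_of_eLpNorm_le {α E ι : Type*} [MeasurableSpace α] {μ : Measure α}
    [IsFiniteMeasure μ] [NormedAddCommGroup E] {f : α → E} (hf : StronglyMeasurable f)
    {l : Filter ι} [l.NeBot] {p : ι → ℝ} (hp : Tendsto p l atTop) {L : ℝ≥0∞}
    (hL : ∀ᶠ i in l, eLpNorm f (ENNReal.ofReal (p i)) μ ≤ L) :
    eLpNorm f ⊤ μ ≤ L := by
  rw [eLpNorm_exponent_top]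
  refine ENNReal.le_of_forall_nnreal_lt fun ρ hρ => ?_
  set s := {x | ρ < ‖f x‖₊}
  have hs : MeasurableSet s := measurableSet_lt measurable_const hf.nnnorm.measurable
  have hs0 : μ s ≠ 0 := fun h0 =>
    hρ.not_ge <| eLpNormEssSup_le_of_ae_nnnorm_bound <| measure_eq_zero_iff_ae_notMem.1 h0
      |>.mono fun x hx => not_lt.1 hx
  have hlow : ∀ᶠ i in l, (ρ : ℝ≥0∞) * μ s ^ (p i)⁻¹ ≤ L := by
    filter_upwards [hL, hp.eventually_gt_atTop 0] with i hi hpi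
    have := le_eLpNorm_of_bddBelow (μ := μ) (by simpa using hpi) ENNReal.ofReal_ne_top ρ hs
      (ae_of_all _ fun x hx => le_of_lt hx)
    rw [ENNReal.smul_def, smul_eq_mul, ENNReal.toReal_ofReal hpi.le, one_div] at this
    exact this.trans hi
  have hμs : Tendsto (fun i => μ s ^ (p i)⁻¹) l (𝓝 1) := by
    have hpos : 0 < (μ s).toReal := ENNReal.toReal_pos hs0 (measure_ne_top μ s)
    have hreal : Tendsto (fun i => (μ s).toReal ^ (p i)⁻¹) l (𝓝 1) := by
      simpa [Function.comp_def] using ((Real.continuousAt_const_rpow hpos.ne').tendsto.comp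
        (tendsto_inv_atTop_zero.comp hp))
    have hcast : ∀ i, μ s ^ (p i)⁻¹ = ENNReal.ofReal ((μ s).toReal ^ (p i)⁻¹) := fun i => by
      rw [← ENNReal.ofReal_rpow_of_pos hpos, ENNReal.ofReal_toReal (measure_ne_top μ s)]
    simp_rw [hcast, ← ENNReal.ofReal_one]
    exact (ENNReal.continuous_ofReal.tendsto 1).comp hreal
  simpa using le_of_tendsto (ENNReal.Tendsto.const_mul hμs (Or.inr ENNReal.coe_ne_top)) hlow

/-- Measure-theoretic core of the sup-norm estimate: let `n ≥ 2`, `ν = n/(n−1)`,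
`q_j = ν^j`, and `C ≥ 1`. There is `C' > 0` depending only on `n` and `C` such
that for any finite measure space `(X, μ)`, any real `k ≥ 1`, and any bounded
measurable nonnegative `F : X → ℝ` satisfying
`‖F‖_{L^{q_{j+1}}}^{q_j} ≤ C·q_j·k·‖F‖_{L^{q_j}}^{q_j}` for every `j`,
one has `‖F‖_{L^∞} ≤ C'·kⁿ·‖F‖_{L¹}`. -/
theorem moser_iteration_sup_estimate (n : ℕ) (hn : 2 ≤ n) (C : ℝ) (hC : 1 ≤ C) :
    ∃ C' : ℝ, 0 < C' ∧
      ∀ (X : Type) [MeasurableSpace X] (μ : Measure X) [IsFiniteMeasure μ]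
        (k : ℝ), 1 ≤ k → ∀ F : X → ℝ,
        Measurable F → (∀ x, 0 ≤ F x) → (∃ M : ℝ, ∀ x, F x ≤ M) →
        (∀ j : ℕ,
          eLpNorm F (ENNReal.ofReal (((n : ℝ) / ((n : ℝ) - 1)) ^ (j + 1))) μ ^
              (((n : ℝ) / ((n : ℝ) - 1)) ^ j) ≤
            ENNReal.ofReal (C * ((n : ℝ) / ((n : ℝ) - 1)) ^ j * k) *
              eLpNorm F (ENNReal.ofReal (((n : ℝ) / ((n : ℝ) - 1)) ^ j)) μ ^
                (((n : ℝ) / ((n : ℝ) - 1)) ^ j)) →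
        eLpNorm F ⊤ μ ≤ ENNReal.ofReal (C' * k ^ n) * eLpNorm F 1 μ := by
  have hn1 : (1 : ℝ) < n := by exact_mod_cast hn
  set ν : ℝ := (n : ℝ) / ((n : ℝ) - 1)
  have hν : 1 < ν := (one_lt_div (sub_pos.2 hn1)).2 (sub_lt_self _ one_pos)
  refine ⟨C ^ n * ν ^ ((n : ℝ) * (n - 1)), by positivity, ?_⟩
  intro X _ μ _ k hk F hF _ _ hiter
  have hCk : 1 ≤ C * k := one_le_mul_of_one_le_of_one_le hC hk
  set A : ℕ → ℝ≥0∞ := fun j => eLpNorm F (ENNReal.ofReal (ν ^ j)) μ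
  have hstep : ∀ j, A (j + 1) ≤ ENNReal.ofReal ((C * k * ν ^ j) ^ (ν ^ j)⁻¹) * A j := fun j => by
    have := ENNReal.le_rpow_inv_mul_of_rpow_le_mul_rpow (by positivity) (hiter j)
    rwa [ENNReal.ofReal_rpow_of_nonneg (by positivity) (by positivity), mul_right_comm] at this
  have hbound (m : ℕ) :
      A m ≤ ENNReal.ofReal (C ^ n * ν ^ ((n : ℝ) * (n - 1)) * k ^ n) * eLpNorm F 1 μ :=
    calc A m ≤ (∏ j ∈ range m, ENNReal.ofReal ((C * k * ν ^ j) ^ (ν ^ j)⁻¹)) * A 0 :=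
          le_prod_range_mul_of_le_mul hstep m
      _ = ENNReal.ofReal (∏ j ∈ range m, (C * k * ν ^ j) ^ (ν ^ j)⁻¹) * A 0 := by
          rw [ENNReal.ofReal_prod_of_nonneg fun j _ => by positivity]
      _ ≤ ENNReal.ofReal ((C * k) ^ (n : ℝ) * ν ^ ((n : ℝ) * (n - 1))) * A 0 := by
          gcongr
          exact Real.prod_range_mul_conjExponent_pow_rpow_inv_pow_le hCk hn1 m
      _ = _ := by
          rw [Real.rpow_natCast, mul_pow, mul_right_comm]
          simp [A]
  exact eLpNorm_top_le_of_eLpNorm_le hF.stronglyMeasurable (tendsto_pow_atTop_atTop_of_one_lt hν)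
    (Eventually.of_forall hbound)
end
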